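/- arXiv:2402.03276 — 4 statements merged into one kernel-verified Lean document; each statement's English description precedes it below -/
import Mathlib

section
/- For every m ∈ ℤ⁺ and k ∈ ℕ: T^k(m) = (m/2^k + Σ_{i=0}^{k−1} p(m)_i / (3^(Σ_{j=0}^{i} p(m)_j) · 2^(k−i))) · 3^(Σ_{i=0}^{k−1} p(m)_i), as an identity of rational (or real) numbers. -/
/-- The accelerated Collatz map `T(m) = m/2` if `m` even, `(3m+1)/2` if `m` odd. -/
def T (m : ℕ) : ℕ := if m % 2 = 0 then m / 2 else (3 * m + 1) / 2

/-- The parity sequence of `m`: `p(m)_k = T^[k] m mod 2`. -/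
def parity (m k : ℕ) : ℕ := T^[k] m % 2

/-!
With `p = n % 2`, one step of `T` is the affine map `n ↦ (3 ^ p * n + p) / 2` over `ℝ`. Hence the
orbit `T^[k] m` solves the recurrence `x (k + 1) = (3 ^ p k * x k + p k) / 2` driven by the parity
sequence, and unrolling such a recurrence gives the formula.
-/

open Finset

theorem eq_of_affine_recurrence {K : Type*} [Field K] {a b : K} (ha : a ≠ 0) (hb : b ≠ 0)
    (x : ℕ → K) (p : ℕ → ℕ) (hx : ∀ k, x (k + 1) = (a ^ p k * x k + p k) / b) (k : ℕ) :
    x k = (x 0 / b ^ k +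
        ∑ i ∈ range k, (p i : K) / (a ^ (∑ j ∈ range (i + 1), p j) * b ^ (k - i))) *
      a ^ (∑ i ∈ range k, p i) := by
  induction k with
  | zero => simp
  | succ k ih =>
    have hshift : ∑ i ∈ range k, (p i : K) / (a ^ (∑ j ∈ range (i + 1), p j) * b ^ (k + 1 - i)) =
        (∑ i ∈ range k, (p i : K) / (a ^ (∑ j ∈ range (i + 1), p j) * b ^ (k - i))) / b := by
      rw [sum_div]
      refine sum_congr rfl fun i hi => ?_
      rw [Nat.sub_add_comm (mem_range.mp hi).le, pow_succ, ← mul_assoc, div_div]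
    rw [hx, ih, sum_range_succ (fun i => (p i : K) / _), hshift, sum_range_succ p,
      Nat.add_sub_cancel_left]
    field_simp
    ring

theorem T_cast_eq (n : ℕ) : (T n : ℝ) = (3 ^ (n % 2) * n + (n % 2 : ℕ)) / 2 := by
  rcases Nat.mod_two_eq_zero_or_one n with h | h
  · rw [T, if_pos h, Nat.cast_div (Nat.dvd_of_mod_eq_zero h) two_ne_zero, h]
    simp
  · rw [T, if_neg (by omega), Nat.cast_div (by omega) two_ne_zero, h]
    push_cast
    ring

theorem collatz_iterate_formula_general (m : ℕ) (k : ℕ) :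
    (T^[k] m : ℝ) =
      ((m : ℝ) / 2 ^ k +
        ∑ i ∈ Finset.range k,
          (parity m i : ℝ) / (3 ^ (∑ j ∈ Finset.range (i + 1), parity m j) * 2 ^ (k - i))) *
      3 ^ (∑ i ∈ Finset.range k, parity m i) :=
  eq_of_affine_recurrence three_ne_zero two_ne_zero (fun k => (T^[k] m : ℝ)) (parity m)
    (fun k => by rw [Function.iterate_succ_apply', T_cast_eq]; rfl) k

theorem collatz_iterate_formula (m : ℕ) (hm : 0 < m) (k : ℕ) :
    (T^[k] m : ℝ) =
      ((m : ℝ) / 2 ^ k +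
        ∑ i ∈ Finset.range k,
          (parity m i : ℝ) / (3 ^ (∑ j ∈ Finset.range (i + 1), parity m j) * 2 ^ (k - i))) *
      3 ^ (∑ i ∈ Finset.range k, parity m i) :=
  collatz_iterate_formula_general m k
end

section
/- Let a, b ∈ ℤ⁺ with a < b, let ε > 0, and let N ∈ ℕ satisfy 0 ≤ N ≤ ⌈log₂(b−a)⌉. Then #{m ∈ [a,b) ∩ ℤ : |Σ_{k=0}^{N−1} p(m)_k − N/2| ≥ ε·N} / (b − a) ≤ 4·e^(−2ε²N). -/
open Finset Function Real

lemma two_mul_T (m : ℕ) : 2 * T m = if m % 2 = 0 then m else 3 * m + 1 := by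
  unfold T; split_ifs <;> omega

lemma T_modEq_T_iff {m m' : ℕ} (N : ℕ) (h : m ≡ m' [MOD 2]) :
    T m ≡ T m' [MOD 2 ^ N] ↔ m ≡ m' [MOD 2 ^ (N + 1)] := by
  have hT : (2 : ℤ) * (T m' - T m) = (if m % 2 = 0 then 1 else 3) * ((m' : ℤ) - m) := by
    have h1 := congrArg (Nat.cast : ℕ → ℤ) (two_mul_T m)
    have h2 := congrArg (Nat.cast : ℕ → ℤ) (two_mul_T m')
    unfold Nat.ModEq at h
    rw [← h] at h2
    split_ifs at h1 h2 ⊢ <;> push_cast at h1 h2 <;> linarith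
  rw [Nat.modEq_iff_dvd, Nat.modEq_iff_dvd, ← mul_dvd_mul_iff_left (two_ne_zero' ℤ), hT]
  push_cast
  rw [← pow_succ']
  split_ifs
  · rw [one_mul]
  · exact ⟨(IsCoprime.pow_left ⟨-1, 1, by norm_num⟩).dvd_of_dvd_mul_left, (Dvd.dvd.mul_left · 3)⟩

lemma parity_zero (m : ℕ) : parity m 0 = m % 2 := rfl

lemma parity_succ (m k : ℕ) : parity m (k + 1) = parity (T m) k := by
  simp only [parity, iterate_succ_apply]

lemma parity_eq_parity_iff_modEq (N : ℕ) {m m' : ℕ} :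
    (∀ k < N, parity m k = parity m' k) ↔ m ≡ m' [MOD 2 ^ N] := by
  induction N generalizing m m' with
  | zero => simp [Nat.modEq_one]
  | succ N ih =>
    simp only [Nat.forall_lt_succ_left, parity_zero, parity_succ, ih]
    refine ⟨fun ⟨h2, hT⟩ => (T_modEq_T_iff N h2).1 hT, fun h => ?_⟩
    have h2 : m ≡ m' [MOD 2] := h.of_dvd (dvd_pow_self 2 N.succ_ne_zero)
    exact ⟨h2, (T_modEq_T_iff N h2).2 h⟩

def bitVectors (N : ℕ) : Finset (Fin N → ℕ) := Fintype.piFinset fun _ => {0, 1}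

lemma card_filter_range_parity_le (N : ℕ) (P : (Fin N → ℕ) → Prop) [DecidablePred P] :
    #{r ∈ range (2 ^ N) | P fun k => parity r k} ≤ #{f ∈ bitVectors N | P f} := by
  refine card_le_card_of_injOn (fun r k => parity r k) (fun r hr => ?_) fun r hr r' hr' h => ?_
  · simp only [coe_filter, Set.mem_ofPred_eq, bitVectors, Fintype.mem_piFinset] at hr ⊢
    exact ⟨fun k => by simpa [parity] using Nat.mod_two_eq_zero_or_one _, hr.2⟩
  · simp only [coe_filter, Set.mem_ofPred_eq, mem_range] at hr hr'
    have hmod := (parity_eq_parity_iff_modEq N).1 fun k hk => congrFun h ⟨k, hk⟩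
    exact hmod.eq_of_lt_of_lt hr.1 hr'.1

section Chernoff

variable (N : ℕ)

lemma sum_bitVectors_exp_le (t : ℝ) :
    ∑ f ∈ bitVectors N, exp (t * (∑ k, (f k : ℝ) - N / 2)) ≤ 2 ^ N * exp (N * t ^ 2 / 8) := by
  have hprod (f : Fin N → ℕ) :
      exp (t * (∑ k, (f k : ℝ) - N / 2)) = ∏ k, exp (t * ((f k : ℝ) - 1 / 2)) := by
    rw [← exp_sum, ← mul_sum, sum_sub_distrib, sum_const, card_univ, Fintype.card_fin,
      nsmul_eq_mul]
    ring_nf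
  calc ∑ f ∈ bitVectors N, exp (t * (∑ k, (f k : ℝ) - N / 2))
      = (2 * cosh (t / 2)) ^ N := by
        simp_rw [hprod]
        rw [bitVectors, ← prod_univ_sum (fun _ => ({0, 1} : Finset ℕ))
          (fun _ j => exp (t * ((j : ℝ) - 1 / 2)))]
        simp only [prod_const, card_univ, Fintype.card_fin, sum_pair zero_ne_one, cosh_eq,
          Nat.cast_zero, Nat.cast_one]
        ring_nf
    _ ≤ (2 * exp (t ^ 2 / 8)) ^ N := by
        gcongr
        exact (cosh_le_exp_half_sq _).trans_eq (by ring_nf)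
    _ = 2 ^ N * exp (N * t ^ 2 / 8) := by
        rw [mul_pow, ← exp_nat_mul, mul_div_assoc]

lemma card_bitVectors_tail_le {ε : ℝ} (hε : 0 ≤ ε) {σ : ℝ} (hσ : σ ^ 2 = 1) :
    (#{f ∈ bitVectors N | ε * N ≤ σ * (∑ k, (f k : ℝ) - N / 2)} : ℝ) ≤
      2 ^ N * exp (-2 * ε ^ 2 * N) := by
  set A := {f ∈ bitVectors N | ε * N ≤ σ * (∑ k, (f k : ℝ) - N / 2)}
  have hmarkov : (#A : ℝ) * exp (4 * ε ^ 2 * N) ≤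
      ∑ f ∈ bitVectors N, exp (4 * ε * σ * (∑ k, (f k : ℝ) - N / 2)) := calc
    (#A : ℝ) * exp (4 * ε ^ 2 * N) = #A • exp (4 * ε ^ 2 * N) := (nsmul_eq_mul _ _).symm
    _ ≤ ∑ f ∈ A, exp (4 * ε * σ * (∑ k, (f k : ℝ) - N / 2)) :=
        card_nsmul_le_sum _ _ _ fun f hf => exp_le_exp.2 <| by
          have := (mem_filter.1 hf).2
          nlinarith
    _ ≤ _ := sum_le_sum_of_subset_of_nonneg (filter_subset _ _) fun _ _ _ => (exp_pos _).le
  have hmgf := sum_bitVectors_exp_le N (4 * ε * σ)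
  rw [show (N : ℝ) * (4 * ε * σ) ^ 2 / 8 = -2 * ε ^ 2 * N + 4 * ε ^ 2 * N by
    linear_combination (2 * ε ^ 2 * N) * hσ, exp_add, ← mul_assoc] at hmgf
  exact le_of_mul_le_mul_right (hmarkov.trans hmgf) (exp_pos _)

lemma card_bitVectors_deviation_le {ε : ℝ} (hε : 0 ≤ ε) :
    (#{f ∈ bitVectors N | ε * N ≤ |∑ k, (f k : ℝ) - N / 2|} : ℝ) ≤
      2 * 2 ^ N * exp (-2 * ε ^ 2 * N) := by
  have hsplit : {f ∈ bitVectors N | ε * N ≤ |∑ k, (f k : ℝ) - N / 2|} =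
      {f ∈ bitVectors N | ε * N ≤ 1 * (∑ k, (f k : ℝ) - N / 2)} ∪
        {f ∈ bitVectors N | ε * N ≤ -1 * (∑ k, (f k : ℝ) - N / 2)} := by
    simp only [le_abs, one_mul, neg_one_mul, filter_or]
  calc (#{f ∈ bitVectors N | ε * N ≤ |∑ k, (f k : ℝ) - N / 2|} : ℝ)
      ≤ #{f ∈ bitVectors N | ε * N ≤ 1 * (∑ k, (f k : ℝ) - N / 2)} +
        #{f ∈ bitVectors N | ε * N ≤ -1 * (∑ k, (f k : ℝ) - N / 2)} := by
        rw [hsplit]; exact_mod_cast card_union_le _ _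
    _ ≤ 2 ^ N * exp (-2 * ε ^ 2 * N) + 2 ^ N * exp (-2 * ε ^ 2 * N) :=
        add_le_add (card_bitVectors_tail_le N hε (one_pow 2))
          (card_bitVectors_tail_le N hε (by norm_num))
    _ = 2 * 2 ^ N * exp (-2 * ε ^ 2 * N) := by ring

end Chernoff

section Periodic

variable {p : ℕ → Prop} [DecidablePred p] {n : ℕ}

lemma card_filter_Ico_add_mul_of_periodic (hp : Periodic p n) (a K : ℕ) :
    #{m ∈ Ico a (a + K * n) | p m} = K * #{r ∈ range n | p r} := by
  induction K with
  | zero => simp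
  | succ K ih =>
    rw [add_mul, one_mul, ← add_assoc,
      ← Ico_union_Ico_eq_Ico (b := a + K * n) (by omega) (by omega), filter_union,
      card_union_of_disjoint (disjoint_filter_filter (Ico_disjoint_Ico_consecutive _ _ _)), ih,
      Nat.filter_Ico_card_eq_of_periodic _ _ _ hp, Nat.count_eq_card_filter_range]
    ring

lemma card_filter_Ico_mul_le_of_periodic (hp : Periodic p n) (hn : 0 < n) {a b : ℕ}
    (hlen : (n : ℝ) ≤ 2 * ((b : ℝ) - a)) :
    (#{m ∈ Ico a b | p m} : ℝ) * n ≤ 2 * ((b : ℝ) - a) * #{r ∈ range n | p r} := by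
  set K := ⌈((b : ℝ) - a) / n⌉₊
  have hnR : (0 : ℝ) < n := by exact_mod_cast hn
  have hcover : b ≤ a + K * n := by
    have := Nat.le_ceil (((b : ℝ) - a) / n)
    rw [div_le_iff₀ hnR] at this
    exact_mod_cast (by linarith : (b : ℝ) ≤ a + K * n)
  have hK : (K : ℝ) ≤ 2 * (((b : ℝ) - a) / n) :=
    Nat.ceil_le_two_mul (by rw [le_div_iff₀ hnR]; linarith)
  have hcard : #{m ∈ Ico a b | p m} ≤ K * #{r ∈ range n | p r} :=
    card_filter_Ico_add_mul_of_periodic hp a K ▸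
      card_le_card (filter_subset_filter _ (Ico_subset_Ico_right hcover))
  calc (#{m ∈ Ico a b | p m} : ℝ) * n ≤ K * #{r ∈ range n | p r} * n := by
        gcongr; exact_mod_cast hcard
    _ ≤ 2 * (((b : ℝ) - a) / n) * #{r ∈ range n | p r} * n := by gcongr
    _ = 2 * ((b : ℝ) - a) * #{r ∈ range n | p r} := by field_simp

end Periodic

lemma two_pow_le_two_mul_of_le_ceil_logb {N : ℕ} {x : ℝ} (hx : 0 < x)
    (hN : (N : ℤ) ≤ ⌈logb 2 x⌉) : (2 : ℝ) ^ N ≤ 2 * x := by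
  rw [Int.le_ceil_iff, lt_logb_iff_rpow_lt one_lt_two hx] at hN
  push_cast at hN
  rw [rpow_sub two_pos, rpow_natCast, rpow_one] at hN
  linarith

open scoped Classical in
theorem parity_sum_concentration_general
    (a b : ℕ) (hab : a < b) (ε : ℝ) (hε : 0 < ε)
    (N : ℕ) (hN : (N : ℤ) ≤ ⌈Real.logb 2 ((b : ℝ) - a)⌉) :
    (((Finset.Ico a b).filter
        (fun m => ε * N ≤ |(∑ k ∈ Finset.range N, (parity m k : ℝ)) - N / 2|)).card : ℝ) /
      ((b : ℝ) - a) ≤ 4 * Real.exp (-2 * ε ^ 2 * N) := by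
  set P : (Fin N → ℕ) → Prop := fun f => ε * N ≤ |∑ k, (f k : ℝ) - N / 2|
  have hsum (m : ℕ) : ∑ k ∈ range N, (parity m k : ℝ) = ∑ k : Fin N, (parity m k : ℝ) :=
    (Fin.sum_univ_eq_sum_range _ _).symm
  simp_rw [hsum]
  have hper : Periodic (fun m => P fun k => parity m k) (2 ^ N) := fun m => by
    simp only [(parity_eq_parity_iff_modEq N).2 (Nat.add_mod_right m (2 ^ N)) _ (Fin.is_lt _)]
  have hba : (0 : ℝ) < b - a := sub_pos.2 (by exact_mod_cast hab)
  have hcount := card_filter_Ico_mul_le_of_periodic hper (by positivity)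
    (by exact_mod_cast two_pow_le_two_mul_of_le_ceil_logb hba hN)
  have hres : (#{r ∈ range (2 ^ N) | P fun k => parity r k} : ℝ) ≤
      2 * 2 ^ N * exp (-2 * ε ^ 2 * N) :=
    (Nat.cast_le.2 (card_filter_range_parity_le N P)).trans (card_bitVectors_deviation_le N hε.le)
  rw [div_le_iff₀ hba]
  refine le_of_mul_le_mul_right (hcount.trans ?_) (by positivity)
  calc 2 * ((b : ℝ) - a) * #{r ∈ range (2 ^ N) | P fun k => parity r k}
      ≤ 2 * ((b : ℝ) - a) * (2 * 2 ^ N * exp (-2 * ε ^ 2 * N)) := by gcongr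
    _ = 4 * exp (-2 * ε ^ 2 * N) * ((b : ℝ) - a) * ((2 ^ N : ℕ) : ℝ) := by push_cast; ring

open scoped Classical in
theorem parity_sum_concentration
    (a b : ℕ) (ha : 0 < a) (hab : a < b) (ε : ℝ) (hε : 0 < ε)
    (N : ℕ) (hN : (N : ℤ) ≤ ⌈Real.logb 2 ((b : ℝ) - a)⌉) :
    (((Finset.Ico a b).filter
        (fun m => ε * N ≤ |(∑ k ∈ Finset.range N, (parity m k : ℝ)) - N / 2|)).card : ℝ) /
      ((b : ℝ) - a) ≤ 4 * Real.exp (-2 * ε ^ 2 * N) :=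
  parity_sum_concentration_general a b hab ε hε N hN
end

section
/- Let S ⊆ ℤ⁺ and a > 1. (Forward direction) If there exist C > 0 and 0 < D < 1 such that #(S ∩ [a^n, a^(n+1)) ∩ ℤ)/(a^(n+1) − a^n) ≥ 1 − C/a^(Dn) for all n ∈ ℕ, then S has D-density. (Converse) If S has D-density for some 0 < D < 1, then there exists C′ > 0 such that #(S ∩ [a^n, a^(n+1)) ∩ ℤ)/(a^(n+1) − a^n) ≥ 1 − C′/a^(Dn) for all n ∈ ℕ. -/
open scoped Classical in
/-- Number of elements of `A` in `{1, …, n}`. -/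
noncomputable def countIn (A : Set ℕ) (n : ℕ) : ℕ :=
  ((Finset.Icc 1 n).filter (fun m => m ∈ A)).card

/-- `S` has `(C,D)`-density: `#(S ∩ [1,N])/N ≥ 1 - C/N^D` for every positive `N`. -/
def hasCDdensity (S : Set ℕ) (C D : ℝ) : Prop :=
  ∀ N : ℕ, 0 < N → 1 - C / (N : ℝ) ^ D ≤ (countIn S N : ℝ) / N

/-- `S` has `D`-density: it has `(C,D)`-density for some `C > 0`. -/
def hasDdensity (S : Set ℕ) (D : ℝ) : Prop := ∃ C > 0, hasCDdensity S C D

/-- `S` is `*`-dense: it has `D`-density for some `0 < D ≤ 1`. -/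
def starDense (S : Set ℕ) : Prop := ∃ D, 0 < D ∧ D ≤ 1 ∧ hasDdensity S D

/-
Cut `ℕ` into the geometric blocks `[a^k, a^(k+1))` and count the elements missing from `S`.
With `b = a^(1-D)`, the block condition says that block `k` misses at most
`1 + C (a-1) b^k ≤ (1 + C (a-1)) b^k` elements. Since `b > 1` this is a geometric series, so
`[1, N]` with `a^m ≤ N < a^(m+1)` misses `O(b^m) = O(N^(1-D))` elements, which is `D`-density.
Conversely, block `n` misses at most as many elements as `[1, a^(n+1)]`, that is
`O(a^((1-D)(n+1))) = O(b^n)`, and the `±1` from rounding the block ends is absorbed by `b^n ≥ 1`.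
-/

open Finset

open scoped Classical

noncomputable def missIn (A : Set ℕ) (N : ℕ) : ℕ :=
  ((Icc 1 N).filter (· ∉ A)).card

noncomputable def geomBlock (a : ℝ) (n : ℕ) : Finset ℕ :=
  Ico ⌈a ^ n⌉₊ ⌈a ^ (n + 1)⌉₊

noncomputable def blockDensity (S : Set ℕ) (a : ℝ) (n : ℕ) : ℝ :=
  ({m : ℕ | m ∈ S ∧ a ^ n ≤ (m : ℝ) ∧ (m : ℝ) < a ^ (n + 1)}.ncard : ℝ) /
    (a ^ (n + 1) - a ^ n)

lemma countIn_add_missIn (A : Set ℕ) (N : ℕ) : countIn A N + missIn A N = N := by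
  rw [countIn, missIn, card_filter_add_card_filter_not, Nat.card_Icc, Nat.add_sub_cancel]

lemma hasCDdensity_iff_missIn_le {A : Set ℕ} {C D : ℝ} :
    hasCDdensity A C D ↔
      ∀ N : ℕ, 0 < N → (missIn A N : ℝ) ≤ C * (N : ℝ) ^ (1 - D) := by
  refine forall₂_congr fun N hN => ?_
  have hN' : (0 : ℝ) < N := by exact_mod_cast hN
  have hsum : (countIn A N : ℝ) + missIn A N = N := by
    exact_mod_cast countIn_add_missIn A N
  rw [Real.rpow_sub hN', Real.rpow_one, le_div_iff₀ hN',
    show (1 - C / (N : ℝ) ^ D) * N = N - C * (N / (N : ℝ) ^ D) by ring]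
  constructor <;> intro h <;> linarith

lemma setOf_mem_and_le_and_lt_eq (A : Set ℕ) (x y : ℝ) :
    {m : ℕ | m ∈ A ∧ x ≤ m ∧ (m : ℝ) < y} =
      ↑((Ico ⌈x⌉₊ ⌈y⌉₊).filter (· ∈ A)) := by
  ext m
  simp [Nat.ceil_le, Nat.lt_ceil, and_comm]

lemma card_Ico_ceil_le {x y : ℝ} (hy : 0 ≤ y) (hxy : x ≤ y) :
    ((Ico ⌈x⌉₊ ⌈y⌉₊).card : ℝ) ≤ y - x + 1 := by
  rw [Nat.card_Ico, Nat.cast_sub (Nat.ceil_mono hxy)]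
  linarith [Nat.ceil_lt_add_one hy, Nat.le_ceil x]

lemma sub_sub_one_le_card_Ico_ceil {x : ℝ} (hx : 0 ≤ x) (y : ℝ) :
    y - x - 1 ≤ ((Ico ⌈x⌉₊ ⌈y⌉₊).card : ℝ) := by
  rw [Nat.card_Ico]
  have := Nat.ceil_lt_add_one hx
  have := Nat.le_ceil y
  rcases le_total ⌈x⌉₊ ⌈y⌉₊ with h | h
  · rw [Nat.cast_sub h]; linarith
  · have : (⌈y⌉₊ : ℝ) ≤ ⌈x⌉₊ := by exact_mod_cast h
    rw [Nat.sub_eq_zero_of_le h, Nat.cast_zero]; linarith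

lemma le_div_sub_one_mul_pow_of_le_add {x : ℕ → ℝ} {b c : ℝ} (hb : 1 < b)
    (h0 : x 0 ≤ c / (b - 1)) (hstep : ∀ k, x (k + 1) ≤ x k + c * b ^ k) (m : ℕ) :
    x m ≤ c / (b - 1) * b ^ m := by
  induction m with
  | zero => simpa using h0
  | succ m ih =>
    have hb' : b - 1 ≠ 0 := by linarith
    calc x (m + 1) ≤ c / (b - 1) * b ^ m + c * b ^ m := by linarith [hstep m]
      _ = c / (b - 1) * b ^ (m + 1) := by field_simp; ring

lemma pow_div_rpow_mul {a : ℝ} (ha : 0 < a) (D : ℝ) (n : ℕ) :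
    a ^ n / a ^ (D * n) = (a ^ (1 - D)) ^ n := by
  rw [← Real.rpow_mul_natCast ha.le, sub_mul, one_mul, Real.rpow_sub ha, Real.rpow_natCast]

section Blocks

variable {S : Set ℕ} {a C D : ℝ}

lemma block_condition_iff (ha : 1 < a) (n : ℕ) :
    1 - C / a ^ (D * n) ≤ blockDensity S a n ↔
      a ^ (n + 1) - a ^ n - C * (a - 1) * (a ^ (1 - D)) ^ n ≤
        (((geomBlock a n).filter (· ∈ S)).card : ℝ) := by
  have ha0 : 0 < a := by linarith
  have hG : a ^ (n + 1) - a ^ n = (a - 1) * a ^ n := by ring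
  have hGpos : 0 < a ^ (n + 1) - a ^ n := by rw [hG]; exact mul_pos (by linarith) (by positivity)
  rw [blockDensity, setOf_mem_and_le_and_lt_eq, Set.ncard_coe_finset, le_div_iff₀ hGpos,
    show (1 - C / a ^ (D * n)) * (a ^ (n + 1) - a ^ n)
      = a ^ (n + 1) - a ^ n - C * (a - 1) * (a ^ n / a ^ (D * n)) by rw [hG]; ring,
    pow_div_rpow_mul ha0, geomBlock]

lemma card_geomBlock_le (ha : 1 ≤ a) (n : ℕ) :
    ((geomBlock a n).card : ℝ) ≤ a ^ (n + 1) - a ^ n + 1 :=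
  card_Ico_ceil_le (by positivity) (pow_le_pow_right₀ ha n.le_succ)

lemma sub_sub_one_le_card_geomBlock (ha : 0 ≤ a) (n : ℕ) :
    a ^ (n + 1) - a ^ n - 1 ≤ ((geomBlock a n).card : ℝ) :=
  sub_sub_one_le_card_Ico_ceil (by positivity) _

lemma card_geomBlock_filter_mem_add_not_mem (n : ℕ) :
    (((geomBlock a n).filter (· ∈ S)).card : ℝ) + ((geomBlock a n).filter (· ∉ S)).card =
      (geomBlock a n).card := by
  exact_mod_cast card_filter_add_card_filter_not _

lemma card_Ico_one_ceil_pow_filter_not_mem_le {b c : ℝ} (hb : 1 < b) (hc : 0 ≤ c)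
    (hblock : ∀ k, (((geomBlock a k).filter (· ∉ S)).card : ℝ) ≤ c * b ^ k) (m : ℕ) :
    (((Ico 1 ⌈a ^ m⌉₊).filter (· ∉ S)).card : ℝ) ≤ c / (b - 1) * b ^ m := by
  refine le_div_sub_one_mul_pow_of_le_add
    (x := fun m => (((Ico 1 ⌈a ^ m⌉₊).filter (· ∉ S)).card : ℝ)) hb ?_ (fun k => ?_) m
  · simpa using div_nonneg hc (by linarith)
  · have hsub : Ico 1 ⌈a ^ (k + 1)⌉₊ ⊆ Ico 1 ⌈a ^ k⌉₊ ∪ geomBlock a k := by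
      intro i
      simp only [geomBlock, mem_union, mem_Ico]
      omega
    have hcard : (((Ico 1 ⌈a ^ (k + 1)⌉₊).filter (· ∉ S)).card : ℝ) ≤
          ((Ico 1 ⌈a ^ k⌉₊).filter (· ∉ S)).card +
            ((geomBlock a k).filter (· ∉ S)).card := by
      have hfilter := filter_subset_filter (· ∉ S) hsub
      rw [filter_union] at hfilter
      exact_mod_cast (card_le_card hfilter).trans (card_union_le _ _)
    linarith [hblock k]

lemma hasCDdensity_of_card_geomBlock_filter_not_mem_le (ha : 1 < a) (hD : D < 1) {c : ℝ}
    (hc : 0 ≤ c)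
    (hblock : ∀ k, (((geomBlock a k).filter (· ∉ S)).card : ℝ) ≤ c * (a ^ (1 - D)) ^ k) :
    hasCDdensity S (c / (a ^ (1 - D) - 1) * a ^ (1 - D)) D := by
  have hb : 1 < a ^ (1 - D) := Real.one_lt_rpow ha (by linarith)
  rw [hasCDdensity_iff_missIn_le]
  intro N hN
  obtain ⟨m, hmN, hNm⟩ := exists_nat_pow_near (Nat.one_le_cast.2 hN) ha
  have hsub : Icc 1 N ⊆ Ico 1 ⌈a ^ (m + 1)⌉₊ := fun i hi => by
    simp only [mem_Icc, mem_Ico] at hi ⊢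
    exact ⟨hi.1, Nat.lt_ceil.2 ((Nat.cast_le.2 hi.2).trans_lt hNm)⟩
  calc (missIn S N : ℝ) ≤ (((Ico 1 ⌈a ^ (m + 1)⌉₊).filter (· ∉ S)).card : ℝ) := by
        exact_mod_cast card_le_card (filter_subset_filter _ hsub)
    _ ≤ c / (a ^ (1 - D) - 1) * (a ^ (1 - D)) ^ (m + 1) :=
        card_Ico_one_ceil_pow_filter_not_mem_le hb hc hblock _
    _ = c / (a ^ (1 - D) - 1) * a ^ (1 - D) * (a ^ m) ^ (1 - D) := by
        rw [pow_succ, Real.rpow_pow_comm (by linarith)]; ring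
    _ ≤ c / (a ^ (1 - D) - 1) * a ^ (1 - D) * (N : ℝ) ^ (1 - D) := by
        have : 0 ≤ c / (a ^ (1 - D) - 1) * a ^ (1 - D) :=
          mul_nonneg (div_nonneg hc (by linarith)) (by linarith)
        gcongr

theorem hasDdensity_of_block_condition (ha : 1 < a) (hD : D < 1) (hC : 0 ≤ C)
    (h : ∀ n : ℕ, 1 - C / a ^ (D * n) ≤ blockDensity S a n) : hasDdensity S D := by
  have hb : 1 < a ^ (1 - D) := Real.one_lt_rpow ha (by linarith)
  refine ⟨_, mul_pos (div_pos (by nlinarith) (by linarith)) (by linarith),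
    hasCDdensity_of_card_geomBlock_filter_not_mem_le ha hD (c := 1 + C * (a - 1)) (by nlinarith)
      fun k => ?_⟩
  have hmem := (block_condition_iff ha k).1 (h k)
  have hcard := card_geomBlock_le ha.le k
  have hsplit := card_geomBlock_filter_mem_add_not_mem (S := S) (a := a) k
  have hbk : 1 ≤ (a ^ (1 - D)) ^ k := one_le_pow₀ hb.le
  nlinarith

lemma card_geomBlock_filter_not_mem_le (ha : 1 < a) (hD : D ≤ 1) (hC : 0 ≤ C)
    (h : hasCDdensity S C D) (n : ℕ) :
    (((geomBlock a n).filter (· ∉ S)).card : ℝ) ≤ C * a ^ (1 - D) * (a ^ (1 - D)) ^ n := by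
  have ha0 : 0 < a := by linarith
  have han : 1 ≤ a ^ n := one_le_pow₀ ha.le
  have han1 : 1 < a ^ (n + 1) := by rw [pow_succ]; nlinarith
  have hceil : 1 < ⌈a ^ (n + 1)⌉₊ := Nat.lt_ceil.2 (by exact_mod_cast han1)
  set d := ⌈a ^ (n + 1)⌉₊ - 1 with hd
  have hd0 : 0 < d := by omega
  have hdle : (d : ℝ) ≤ a ^ (n + 1) := by
    rw [hd, Nat.cast_sub hceil.le, Nat.cast_one]
    linarith [Nat.ceil_lt_add_one (by positivity : (0 : ℝ) ≤ a ^ (n + 1))]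
  have hsub : geomBlock a n ⊆ Icc 1 d := fun i hi => by
    have := Nat.one_le_ceil_iff.2 (by positivity : 0 < a ^ n)
    simp only [geomBlock, mem_Ico, mem_Icc] at hi ⊢
    omega
  calc (((geomBlock a n).filter (· ∉ S)).card : ℝ) ≤ missIn S d := by
        exact_mod_cast card_le_card (filter_subset_filter _ hsub)
    _ ≤ C * (d : ℝ) ^ (1 - D) := hasCDdensity_iff_missIn_le.1 h d hd0
    _ ≤ C * (a ^ (n + 1)) ^ (1 - D) := by gcongr
    _ = C * a ^ (1 - D) * (a ^ (1 - D)) ^ n := by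
        rw [← Real.rpow_pow_comm ha0.le, pow_succ]; ring

theorem exists_block_condition_of_hasDdensity (ha : 1 < a) (hD : D ≤ 1) (h : hasDdensity S D) :
    ∃ C' > 0, ∀ n : ℕ, 1 - C' / a ^ (D * n) ≤ blockDensity S a n := by
  obtain ⟨C, hC, hSC⟩ := h
  have hb : 1 ≤ a ^ (1 - D) := Real.one_le_rpow ha.le (by linarith)
  refine ⟨(1 + C * a ^ (1 - D)) / (a - 1), div_pos (by positivity) (by linarith),
    fun n => (block_condition_iff ha n).2 ?_⟩
  have hnot := card_geomBlock_filter_not_mem_le ha hD hC.le hSC n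
  have hcard := sub_sub_one_le_card_geomBlock (by linarith : (0 : ℝ) ≤ a) n
  have hsplit := card_geomBlock_filter_mem_add_not_mem (S := S) (a := a) n
  have hbn : 1 ≤ (a ^ (1 - D)) ^ n := one_le_pow₀ hb
  rw [div_mul_cancel₀ _ (by linarith : a - 1 ≠ 0)]
  nlinarith

end Blocks

theorem density_on_geometric_blocks_general (S : Set ℕ) (a : ℝ) (ha : 1 < a)
    (D : ℝ) (hD1 : D < 1) :
    ((∃ C > 0, ∀ n : ℕ,
        1 - C / a ^ (D * n) ≤
          (({m : ℕ | m ∈ S ∧ a ^ n ≤ (m : ℝ) ∧ (m : ℝ) < a ^ (n + 1)}.ncard : ℝ) /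
            (a ^ (n + 1) - a ^ n))) →
      hasDdensity S D) ∧
    (hasDdensity S D →
      ∃ C' > 0, ∀ n : ℕ,
        1 - C' / a ^ (D * n) ≤
          (({m : ℕ | m ∈ S ∧ a ^ n ≤ (m : ℝ) ∧ (m : ℝ) < a ^ (n + 1)}.ncard : ℝ) /
            (a ^ (n + 1) - a ^ n))) :=
  ⟨fun ⟨_, hC, h⟩ => hasDdensity_of_block_condition ha hD1 hC.le h,
    exists_block_condition_of_hasDdensity ha hD1.le⟩

theorem density_on_geometric_blocks (S : Set ℕ) (a : ℝ) (ha : 1 < a)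
    (D : ℝ) (hD0 : 0 < D) (hD1 : D < 1) :
    ((∃ C > 0, ∀ n : ℕ,
        1 - C / a ^ (D * n) ≤
          (({m : ℕ | m ∈ S ∧ a ^ n ≤ (m : ℝ) ∧ (m : ℝ) < a ^ (n + 1)}.ncard : ℝ) /
            (a ^ (n + 1) - a ^ n))) →
      hasDdensity S D) ∧
    (hasDdensity S D →
      ∃ C' > 0, ∀ n : ℕ,
        1 - C' / a ^ (D * n) ≤
          (({m : ℕ | m ∈ S ∧ a ^ n ≤ (m : ℝ) ∧ (m : ℝ) < a ^ (n + 1)}.ncard : ℝ) /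
            (a ^ (n + 1) - a ^ n))) :=
  density_on_geometric_blocks_general S a ha D hD1
end

section
/- Suppose 0 < D ≤ 1, K ∈ ℤ⁺, and S ⊆ ℤ⁺ has D-density. Then for every η with 0 < η < D/(2−D), the set {m ∈ ℤ⁺ : for all natural numbers k with 0 ≤ k ≤ ⌊η·log₃ m⌋ and all natural numbers i with 0 ≤ i < K·3^k, 3^k·m + i ∈ S} has (D(1+η) − 2η)-density. -/
open Finset Real

theorem countIn_add_countIn_compl (A : Set ℕ) (n : ℕ) : countIn A n + countIn Aᶜ n = n := by
  classical
  simp only [countIn, Set.mem_compl_iff]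
  convert card_filter_add_card_filter_not (s := Icc 1 n) (· ∈ A) using 1
  simp

theorem hasCDdensity_iff_countIn_compl_le {S : Set ℕ} {C D : ℝ} :
    hasCDdensity S C D ↔
      ∀ N : ℕ, 0 < N → (countIn Sᶜ N : ℝ) ≤ C * (N : ℝ) ^ (1 - D) := by
  refine forall₂_congr fun N hN => ?_
  have hN' : (0 : ℝ) < N := by exact_mod_cast hN
  have hsum : (countIn S N : ℝ) = N - countIn Sᶜ N := by
    rw [eq_sub_iff_add_eq]; exact_mod_cast countIn_add_countIn_compl S N
  rw [le_div_iff₀ hN', hsum, rpow_sub hN', rpow_one, sub_mul, one_mul, div_mul_eq_mul_div,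
    mul_div_assoc]
  constructor <;> intro h <;> linarith

open scoped Classical in
/-- Each `n ∉ S` witnesses the failure for at most `K` values of `m`, namely those with
`a * m ≤ n < a * (m + K)`. -/
theorem card_filter_exists_notMem_le (S : Set ℕ) {a : ℕ} (ha : 0 < a) (K N : ℕ) :
    #{m ∈ Icc 1 N | ∃ i < K * a, a * m + i ∉ S} ≤ K * countIn Sᶜ (a * (N + K)) := by
  calc #{m ∈ Icc 1 N | ∃ i < K * a, a * m + i ∉ S}
      ≤ #({n ∈ Icc 1 (a * (N + K)) | n ∈ Sᶜ}.biUnion fun n => Ioc (n / a - K) (n / a)) := by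
        refine card_le_card fun m hm => ?_
        simp only [mem_filter, mem_Icc] at hm
        obtain ⟨⟨hm1, hmN⟩, i, hi, hiS⟩ := hm
        simp only [mem_biUnion, mem_filter, mem_Icc, mem_Ioc]
        refine ⟨a * m + i, ⟨⟨?_, ?_⟩, hiS⟩, ?_, ?_⟩
        · nlinarith
        · nlinarith
        · have : (a * m + i) / a < m + K := by rw [Nat.div_lt_iff_lt_mul ha]; nlinarith
          omega
        · rw [Nat.le_div_iff_mul_le ha]; nlinarith
    _ ≤ ∑ n ∈ {n ∈ Icc 1 (a * (N + K)) | n ∈ Sᶜ}, #(Ioc (n / a - K) (n / a)) :=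
        card_biUnion_le
    _ ≤ #{n ∈ Icc 1 (a * (N + K)) | n ∈ Sᶜ} • K :=
        sum_le_card_nsmul _ _ _ fun n _ => by rw [Nat.card_Ioc]; omega
    _ = K * countIn Sᶜ (a * (N + K)) := by rw [smul_eq_mul, mul_comm, countIn]; congr

theorem countIn_compl_le_sum (S : Set ℕ) {b : ℕ} (hb : 0 < b) (K : ℕ) {h : ℕ → ℕ}
    (hh : Monotone h) (N : ℕ) :
    countIn {m | ∀ k ≤ h m, ∀ i < K * b ^ k, b ^ k * m + i ∈ S}ᶜ N ≤
      ∑ k ∈ range (h N + 1), K * countIn Sᶜ (b ^ k * (N + K)) := by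
  classical
  calc countIn {m | ∀ k ≤ h m, ∀ i < K * b ^ k, b ^ k * m + i ∈ S}ᶜ N
      ≤ #((range (h N + 1)).biUnion
          fun k => {m ∈ Icc 1 N | ∃ i < K * b ^ k, b ^ k * m + i ∉ S}) := by
        refine card_le_card fun m hm => ?_
        simp only [mem_filter, mem_Icc, Set.mem_compl_iff, Set.mem_ofPred_eq] at hm
        push Not at hm
        obtain ⟨⟨hm1, hmN⟩, k, hk, i, hi, hiS⟩ := hm
        simp only [mem_biUnion, mem_range, mem_filter, mem_Icc]
        exact ⟨k, Nat.lt_succ_of_le (hk.trans (hh hmN)), ⟨hm1, hmN⟩, i, hi, hiS⟩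
    _ ≤ ∑ k ∈ range (h N + 1), #{m ∈ Icc 1 N | ∃ i < K * b ^ k, b ^ k * m + i ∉ S} :=
        card_biUnion_le
    _ ≤ ∑ k ∈ range (h N + 1), K * countIn Sᶜ (b ^ k * (N + K)) :=
        sum_le_sum fun k _ => card_filter_exists_notMem_le S (pow_pos hb k) K N

theorem monotone_floor_mul_logb {b η : ℝ} (hb : 1 < b) (hη : 0 ≤ η) :
    Monotone fun m : ℕ => ⌊η * logb b m⌋₊ := by
  intro m m' hmm'
  rcases Nat.eq_zero_or_pos m with rfl | hm
  · simp
  refine Nat.floor_le_floor (mul_le_mul_of_nonneg_left ?_ hη)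
  exact logb_le_logb_of_le hb (by exact_mod_cast hm) (by exact_mod_cast hmm')

theorem pow_floor_mul_logb_le {b η x : ℝ} (hb : 1 < b) (hη : 0 ≤ η) (hx : 1 ≤ x) :
    b ^ ⌊η * logb b x⌋₊ ≤ x ^ η := by
  calc b ^ ⌊η * logb b x⌋₊ = b ^ (⌊η * logb b x⌋₊ : ℝ) := (rpow_natCast b _).symm
    _ ≤ b ^ (η * logb b x) :=
        rpow_le_rpow_of_exponent_le hb.le (Nat.floor_le (by positivity [logb_nonneg hb hx]))
    _ = x ^ η := by
        rw [mul_comm, rpow_mul (by positivity), rpow_logb (by positivity) hb.ne' (by positivity)]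

theorem floor_mul_logb_add_one_le {b η x : ℝ} (hb : 1 < b) (hη : 0 < η) (hx : 1 ≤ x) :
    (⌊η * logb b x⌋₊ : ℝ) + 1 ≤ (1 + 1 / log b) * x ^ η := by
  have hlog : η * log x ≤ x ^ η := by
    have := log_le_rpow_div (x := x) (by positivity) hη
    rwa [le_div_iff₀ hη, mul_comm] at this
  have hfloor : (⌊η * logb b x⌋₊ : ℝ) ≤ x ^ η / log b := by
    refine (Nat.floor_le (mul_nonneg hη.le (logb_nonneg hb hx))).trans ?_
    rw [logb, ← mul_div_assoc]
    exact div_le_div_of_nonneg_right hlog (log_pos hb).le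
  have := one_le_rpow hx hη.le
  linarith [show (1 + 1 / log b) * x ^ η = x ^ η + x ^ η / log b by ring]

theorem countIn_compl_pow_mul_le {S : Set ℕ} {C D : ℝ} (hS : hasCDdensity S C D) (hC : 0 ≤ C)
    (hD₀ : 0 ≤ D) (hD₁ : D ≤ 1) {b : ℕ} (hb : 0 < b) {η : ℝ} (K : ℕ) {N k : ℕ}
    (hN : 0 < N) (hk : (b : ℝ) ^ k ≤ (N : ℝ) ^ η) :
    (countIn Sᶜ (b ^ k * (N + K)) : ℝ) ≤ C * (K + 1) * (N : ℝ) ^ ((1 + η) * (1 - D)) := by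
  have hN' : (1 : ℝ) ≤ N := by exact_mod_cast hN
  have hM : ((b ^ k * (N + K) : ℕ) : ℝ) ≤ (K + 1) * (N : ℝ) ^ (1 + η) := by
    rw [rpow_add (by positivity), rpow_one]
    push_cast
    have : (N + K : ℝ) ≤ (K + 1) * N := by nlinarith
    calc (b : ℝ) ^ k * (N + K) ≤ (N : ℝ) ^ η * ((K + 1) * N) := by gcongr
      _ = (K + 1) * (N * (N : ℝ) ^ η) := by ring
  calc (countIn Sᶜ (b ^ k * (N + K)) : ℝ)
      ≤ C * ((b ^ k * (N + K) : ℕ) : ℝ) ^ (1 - D) :=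
        hasCDdensity_iff_countIn_compl_le.mp hS _ (by positivity)
    _ ≤ C * ((K + 1) * (N : ℝ) ^ (1 + η)) ^ (1 - D) := by gcongr
    _ = C * ((K + 1 : ℝ) ^ (1 - D) * (N : ℝ) ^ ((1 + η) * (1 - D))) := by
        rw [mul_rpow (by positivity) (by positivity), ← rpow_mul (by positivity)]
    _ ≤ C * ((K + 1) * (N : ℝ) ^ ((1 + η) * (1 - D))) := by
        gcongr
        exact rpow_le_self_of_one_le (by linarith [K.cast_nonneg (α := ℝ)]) (by linarith)
    _ = C * (K + 1) * (N : ℝ) ^ ((1 + η) * (1 - D)) := by ring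

theorem leverage_density_general (D : ℝ) (hD0 : 0 < D) (hD1 : D ≤ 1) (K : ℕ)
    (S : Set ℕ) (hS : hasDdensity S D) (η : ℝ) (hη0 : 0 < η) :
    hasDdensity
      {m : ℕ | ∀ k : ℕ, k ≤ ⌊η * Real.logb 3 m⌋₊ → ∀ i : ℕ, i < K * 3 ^ k → 3 ^ k * m + i ∈ S}
      (D * (1 + η) - 2 * η) := by
  obtain ⟨C, hC0, hC⟩ := hS
  refine ⟨(1 + 1 / log 3) * (K + 1) ^ 2 * C, by positivity, ?_⟩
  rw [hasCDdensity_iff_countIn_compl_le]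
  intro N hN
  have hN' : (1 : ℝ) ≤ N := by exact_mod_cast hN
  set L := ⌊η * logb 3 N⌋₊
  set E := C * (K + 1) * (N : ℝ) ^ ((1 + η) * (1 - D)) with hE
  have hlevel : ∀ k ∈ range (L + 1),
      ((K * countIn Sᶜ (3 ^ k * (N + K)) : ℕ) : ℝ) ≤ K * E := fun k hk => by
    have h3k : ((3 : ℕ) : ℝ) ^ k ≤ (N : ℝ) ^ η := by
      exact_mod_cast
        (pow_le_pow_right₀ (by norm_num) (Nat.lt_succ_iff.mp (mem_range.mp hk))).trans
          (pow_floor_mul_logb_le (by norm_num) hη0.le hN')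
    push_cast
    exact mul_le_mul_of_nonneg_left
      (countIn_compl_pow_mul_le hC hC0.le hD0.le hD1 three_pos K hN h3k) K.cast_nonneg
  calc (countIn _ N : ℝ)
      ≤ ∑ k ∈ range (L + 1), ((K * countIn Sᶜ (3 ^ k * (N + K)) : ℕ) : ℝ) := by
        exact_mod_cast countIn_compl_le_sum S three_pos K
          (monotone_floor_mul_logb (by norm_num) hη0.le) N
    _ ≤ (L + 1) * (K * E) := by simpa using sum_le_sum hlevel
    _ ≤ (1 + 1 / log 3) * (N : ℝ) ^ η * ((K + 1) * E) := by
        gcongr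
        · exact floor_mul_logb_add_one_le (by norm_num) hη0 hN'
        · linarith
    _ = (1 + 1 / log 3) * (K + 1) ^ 2 * C * (N : ℝ) ^ (1 - (D * (1 + η) - 2 * η)) := by
        have hexp : (N : ℝ) ^ η * (N : ℝ) ^ ((1 + η) * (1 - D)) =
            (N : ℝ) ^ (1 - (D * (1 + η) - 2 * η)) := by
          rw [← rpow_add (by positivity)]; ring_nf
        rw [hE, ← hexp]; ring

theorem leverage_density (D : ℝ) (hD0 : 0 < D) (hD1 : D ≤ 1) (K : ℕ) (hK : 0 < K)
    (S : Set ℕ) (hS : hasDdensity S D) (η : ℝ) (hη0 : 0 < η) (hη1 : η < D / (2 - D)) :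
    hasDdensity
      {m : ℕ | ∀ k : ℕ, k ≤ ⌊η * Real.logb 3 m⌋₊ → ∀ i : ℕ, i < K * 3 ^ k → 3 ^ k * m + i ∈ S}
      (D * (1 + η) - 2 * η) :=
  leverage_density_general D hD0 hD1 K S hS η hη0
end
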